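/- arXiv:2507.03727 — 7 statements merged into one kernel-verified Lean document; each statement's English description precedes it below -/
import Mathlib

section
/- Let p_1, ..., p_m be primes and n ≥ 1 an integer with p_j ≡ 1 (mod n) for all j. If x_1, ..., x_R are positive integers, each of whose prime divisors lies in {p_1, ..., p_m}, satisfying ∑_{i=1}^R 1/x_i = 1, then R ≡ 1 (mod n). -/
theorem stmt_0 (m R n : ℕ) (p : Fin m → ℕ) (hp : ∀ j, (p j).Prime)
    (hn : 1 ≤ n) (hmod : ∀ j, p j ≡ 1 [MOD n])
    (x : Fin R → ℕ) (hpos : ∀ i, 0 < x i)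
    (hdiv : ∀ i, ∀ q : ℕ, q.Prime → q ∣ x i → ∃ j, q = p j)
    (hsum : ∑ i, ((x i : ℚ))⁻¹ = 1) :
    R ≡ 1 [MOD n] := by
  -- Each x i ≡ 1 mod n
  have hx1 : ∀ i, ((x i : ZMod n) = 1) := by
    intro i
    have hx : (x i).primeFactorsList.prod = x i :=
      Nat.prod_primeFactorsList (hpos i).ne'
    have heq : ((x i : ℕ) : ZMod n) = (((x i).primeFactorsList.map (Nat.cast : ℕ → ZMod n)).prod) := by
      conv_lhs => rw [← hx]
      rw [Nat.cast_list_prod]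
    rw [heq]
    have : ∀ q ∈ (x i).primeFactorsList.map (Nat.cast : ℕ → ZMod n), q = 1 := by
      intro q hq
      simp only [List.mem_map] at hq
      obtain ⟨a, ha, rfl⟩ := hq
      have hprime := Nat.prime_of_mem_primeFactorsList ha
      have hadvd := Nat.dvd_of_mem_primeFactorsList ha
      obtain ⟨j, rfl⟩ := hdiv i a hprime hadvd
      have := hmod j
      have := (ZMod.natCast_eq_natCast_iff _ _ _).mpr this
      simpa using this
    rw [List.prod_eq_one this]
  -- Multiply out the sum
  have hxne : ∀ i, (x i : ℚ) ≠ 0 := fun i => by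
    exact_mod_cast (hpos i).ne'
  have key : (∑ i, ∏ j ∈ Finset.univ.erase i, x j) = ∏ j, x j := by
    have h1 : (∑ i, ((x i : ℚ))⁻¹) * ∏ j, (x j : ℚ) = ∏ j, (x j : ℚ) := by
      rw [hsum, one_mul]
    rw [Finset.sum_mul] at h1
    have h2 : ∀ i : Fin R, ((x i : ℚ))⁻¹ * ∏ j, (x j : ℚ) =
        ∏ j ∈ Finset.univ.erase i, (x j : ℚ) := by
      intro i
      rw [← Finset.prod_erase_mul _ _ (Finset.mem_univ i), mul_comm, mul_assoc,
        mul_inv_cancel₀ (hxne i), mul_one]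
    rw [Finset.sum_congr rfl (fun i _ => h2 i)] at h1
    exact_mod_cast h1
  -- Project to ZMod n
  have hz : ((∑ i, ∏ j ∈ Finset.univ.erase i, x j : ℕ) : ZMod n) = ((∏ j, x j : ℕ) : ZMod n) := by
    rw [key]
  push_cast at hz
  simp only [hx1, Finset.prod_const_one, Finset.sum_const, Finset.card_erase_of_mem,
    Finset.mem_univ, smul_eq_mul, mul_one] at hz
  have : ((R : ℕ) : ZMod n) = ((1 : ℕ) : ZMod n) := by
    simpa using hz
  exact (ZMod.natCast_eq_natCast_iff _ _ _).mp this
end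

section
/- Let p_1, ..., p_m be primes. If there exist positive integers x_1, ..., x_R, each of whose prime divisors lies in {p_1, ..., p_m}, with ∑_{i=1}^R 1/x_i = 1, then gcd(p_1 - 1, ..., p_m - 1) divides R - 1. -/
/-
Let d = gcd(p_j - 1). Every p_j is 1 in ZMod d, hence so is every x_i and every product
of them. Clearing denominators in ∑ 1/x_i = 1 gives ∑_i ∏_{j ≠ i} x_j = ∏_j x_j, which
read in ZMod d says R = 1.
-/

open Finset

theorem ZMod.natCast_eq_one_iff_dvd_sub_one {d n : ℕ} (hn : 1 ≤ n) :
    (n : ZMod d) = 1 ↔ d ∣ n - 1 := by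
  rw [← Nat.cast_one, ZMod.natCast_eq_natCast_iff, Nat.ModEq.comm, Nat.modEq_iff_dvd' hn]

theorem ZMod.natCast_eq_one_of_forall_prime_dvd {d n : ℕ} (hn : n ≠ 0)
    (h : ∀ q, q.Prime → q ∣ n → d ∣ q - 1) : (n : ZMod d) = 1 := by
  rw [← Nat.prod_primeFactorsList hn, Nat.cast_list_prod]
  refine List.prod_eq_one fun a ha => ?_
  obtain ⟨q, hq, rfl⟩ := List.mem_map.mp ha
  have hq_prime := Nat.prime_of_mem_primeFactorsList hq
  exact (natCast_eq_one_iff_dvd_sub_one hq_prime.one_le).mpr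
    (h q hq_prime (Nat.dvd_of_mem_primeFactorsList hq))

theorem sum_prod_erase_eq_prod_of_sum_inv_eq_one {ι : Type*} [Fintype ι] [DecidableEq ι]
    (x : ι → ℕ) (hx : ∀ i, x i ≠ 0) (h : ∑ i, (x i : ℚ)⁻¹ = 1) :
    ∑ i, ∏ j ∈ univ.erase i, x j = ∏ i, x i := by
  have hx' : ∀ i, (x i : ℚ) ≠ 0 := fun i => Nat.cast_ne_zero.mpr (hx i)
  have herase (i : ι) :
      ∏ j ∈ univ.erase i, (x j : ℚ) = (∏ j, (x j : ℚ)) * (x i : ℚ)⁻¹ := by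
    rw [eq_mul_inv_iff_mul_eq₀ (hx' i), mul_comm,
      mul_prod_erase univ (fun j => (x j : ℚ)) (mem_univ i)]
  exact_mod_cast show ∑ i, ∏ j ∈ univ.erase i, (x j : ℚ) = ∏ i, (x i : ℚ) by
    simp_rw [herase, ← mul_sum, h, mul_one]

theorem stmt_1_general (m R : ℕ) (p : Fin m → ℕ)
    (x : Fin R → ℕ) (hpos : ∀ i, 0 < x i)
    (hdiv : ∀ i, ∀ q : ℕ, q.Prime → q ∣ x i → ∃ j, q = p j)
    (hsum : ∑ i, ((x i : ℚ))⁻¹ = 1) :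
    (Finset.univ.gcd fun j => p j - 1) ∣ R - 1 := by
  set d := Finset.univ.gcd fun j => p j - 1
  have hx_one : ∀ i, (x i : ZMod d) = 1 := fun i =>
    ZMod.natCast_eq_one_of_forall_prime_dvd (hpos i).ne' fun q hq hqx => by
      obtain ⟨j, rfl⟩ := hdiv i q hq hqx
      exact Finset.gcd_dvd (mem_univ j)
  have hR_pos : 1 ≤ R := Nat.one_le_iff_ne_zero.mpr (by rintro rfl; simp at hsum)
  have hR_one : (R : ZMod d) = 1 := by
    simpa [hx_one] using congrArg (Nat.cast : ℕ → ZMod d)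
      (sum_prod_erase_eq_prod_of_sum_inv_eq_one x (fun i => (hpos i).ne') hsum)
  exact (ZMod.natCast_eq_one_iff_dvd_sub_one hR_pos).mp hR_one

theorem stmt_1 (m R : ℕ) (p : Fin m → ℕ) (hp : ∀ j, (p j).Prime)
    (x : Fin R → ℕ) (hpos : ∀ i, 0 < x i)
    (hdiv : ∀ i, ∀ q : ℕ, q.Prime → q ∣ x i → ∃ j, q = p j)
    (hsum : ∑ i, ((x i : ℚ))⁻¹ = 1) :
    (Finset.univ.gcd fun j => p j - 1) ∣ R - 1 :=
  stmt_1_general m R p x hpos hdiv hsum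
end

section
/- Let p be a prime and R ≥ 1 with p - 1 dividing R - 1. If x_1, ..., x_R are positive integers, each a power of p, with ∑_{i=1}^R 1/x_i = 1, then x_i ≤ p^{(R-1)/(p-1)} for every i. -/
lemma stmt_4_key (p : ℕ) (hp : p.Prime) :
    ∀ n (s : Multiset ℕ), s.card = n →
    (s.map fun a => ((p:ℚ)^a)⁻¹).sum = 1 →
    ∀ a ∈ s, (p-1) * a ≤ s.card - 1 := by
  intro n
  induction n using Nat.strong_induction_on with
  | _ n ih =>
  intro s hcard hsum a ha
  have hp2 : 2 ≤ p := hp.two_le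
  have hp0 : (p:ℚ) ≠ 0 := by exact_mod_cast hp.pos.ne'
  have hs0 : s ≠ 0 := by rintro rfl; simp at ha
  have hfne : s.toFinset.Nonempty := by
    obtain ⟨b, hb⟩ := Multiset.exists_mem_of_ne_zero hs0
    exact ⟨b, Multiset.mem_toFinset.2 hb⟩
  set M := s.toFinset.max' hfne with hMdef
  have hle : ∀ b ∈ s, b ≤ M := fun b hb => Finset.le_max' _ _ (Multiset.mem_toFinset.2 hb)
  have hMmem : M ∈ s := Multiset.mem_toFinset.1 (s.toFinset.max'_mem hfne)
  rcases Nat.eq_zero_or_pos M with hM0 | hM1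
  · have ha0 : a = 0 := Nat.le_zero.1 (hM0 ▸ hle a ha)
    simp [ha0]
  -- main case: M ≥ 1
  have hnat : (s.map fun b => p^(M-b)).sum = p^M := by
    have h1 : (s.map fun b => ((p:ℚ))^(M-b)).sum = (p:ℚ)^M := by
      calc (s.map fun b => ((p:ℚ))^(M-b)).sum
          = (s.map fun b => (p:ℚ)^M * ((p:ℚ)^b)⁻¹).sum := by
            apply congrArg
            apply Multiset.map_congr rfl
            intro b hb
            rw [pow_sub₀ (p:ℚ) hp0 (hle b hb)]
        _ = (p:ℚ)^M * (s.map fun b => ((p:ℚ)^b)⁻¹).sum := Multiset.sum_map_mul_left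
        _ = (p:ℚ)^M := by rw [hsum, mul_one]
    have h2 : (((s.map fun b => p^(M-b)).sum : ℕ) : ℚ) = ((p^M : ℕ) : ℚ) := by
      rw [Nat.cast_multiset_sum, Multiset.map_map]
      simp only [Function.comp_def]
      push_cast
      rw [h1]
    exact_mod_cast h2
  have hmapsum : (s.map fun b => p^(M-b)).sum
      = Multiset.count M s + ((s.filter (fun b => ¬ b = M)).map fun b => p^(M-b)).sum := by
    conv_lhs => rw [← Multiset.filter_add_not (fun b => b = M) s]
    rw [Multiset.map_add, Multiset.sum_add, Multiset.filter_eq', Multiset.map_replicate,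
      Multiset.sum_replicate]
    simp
  have hdvd2 : p ∣ ((s.filter (fun b => ¬ b = M)).map fun b => p^(M-b)).sum := by
    apply Multiset.dvd_sum
    intro y hy
    obtain ⟨b, hb, rfl⟩ := Multiset.mem_map.1 hy
    have hbM : b ≠ M := (Multiset.mem_filter.1 hb).2
    have hblt : b < M := lt_of_le_of_ne (hle b (Multiset.mem_of_mem_filter hb)) hbM
    exact dvd_pow_self p (by omega)
  have hdvd_count : p ∣ Multiset.count M s := by
    have h := hnat
    rw [hmapsum] at h
    have hc : Multiset.count M s
        = p^M - ((s.filter (fun b => ¬ b = M)).map fun b => p^(M-b)).sum := by omega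
    rw [hc]
    exact Nat.dvd_sub (dvd_pow_self p (by omega)) hdvd2
  have hcount1 : 0 < Multiset.count M s := Multiset.count_pos.2 hMmem
  have hcountp : p ≤ Multiset.count M s := Nat.le_of_dvd hcount1 hdvd_count
  have hrep : Multiset.replicate p M ≤ s := Multiset.le_count_iff_replicate_le.1 hcountp
  have hps : p ≤ s.card := by
    have := Multiset.card_le_card hrep
    simpa using this
  set t : Multiset ℕ := (M-1) ::ₘ (s - Multiset.replicate p M) with htdef
  have hcardt : t.card = s.card - p + 1 := by
    rw [htdef, Multiset.card_cons, Multiset.card_sub hrep]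
    simp [Nat.add_comm]
  have hsumt : (t.map fun a => ((p:ℚ)^a)⁻¹).sum = 1 := by
    have hsplit : s - Multiset.replicate p M + Multiset.replicate p M = s :=
      tsub_add_cancel_of_le hrep
    have hsum' : ((s - Multiset.replicate p M).map fun a => ((p:ℚ)^a)⁻¹).sum
        + p * ((p:ℚ)^M)⁻¹ = 1 := by
      rw [← hsum]
      conv_rhs => rw [← hsplit]
      rw [Multiset.map_add, Multiset.sum_add, Multiset.map_replicate, Multiset.sum_replicate]
      push_cast
      ring
    rw [htdef, Multiset.map_cons, Multiset.sum_cons]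
    have hpm : ((p:ℚ)^(M-1))⁻¹ = p * ((p:ℚ)^M)⁻¹ := by
      have hM' : M = (M-1) + 1 := by omega
      rw [hM', pow_succ]
      simp
      field_simp
    rw [hpm]
    linarith [hsum']
  have hlt : t.card < n := by omega
  have hIH := ih t.card hlt t rfl hsumt (M-1) (Multiset.mem_cons_self _ _)
  -- hIH : (p-1) * (M-1) ≤ t.card - 1
  calc (p-1) * a ≤ (p-1) * M := Nat.mul_le_mul_left _ (hle a ha)
    _ = (p-1) * (M-1) + (p-1) := by
        conv_lhs => rw [show M = (M-1)+1 by omega]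
        ring
    _ ≤ (t.card - 1) + (p-1) := Nat.add_le_add_right hIH _
    _ ≤ s.card - 1 := by omega

theorem stmt_4 (p R : ℕ) (hp : p.Prime) (hR : 1 ≤ R) (hdvd : (p - 1) ∣ (R - 1))
    (x : Fin R → ℕ) (hpow : ∀ i, ∃ a : ℕ, x i = p ^ a)
    (hsum : ∑ i, ((x i : ℚ))⁻¹ = 1) :
    ∀ i, x i ≤ p ^ ((R - 1) / (p - 1)) := by
  choose a hax using hpow
  intro i
  set s : Multiset ℕ := Finset.univ.val.map a with hsdef
  have hcard : s.card = R := by simp [hsdef]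
  have hsum' : (s.map fun b => ((p:ℚ)^b)⁻¹).sum = 1 := by
    rw [hsdef, Multiset.map_map]
    rw [← hsum]
    rw [Finset.sum]
    apply congrArg
    apply Multiset.map_congr rfl
    intro j hj
    simp [hax j]
  have hmem : a i ∈ s := by
    rw [hsdef]
    exact Multiset.mem_map.2 ⟨i, by simp, rfl⟩
  have hkey := stmt_4_key p hp s.card s rfl hsum' (a i) hmem
  rw [hcard] at hkey
  have hp1 : 0 < p - 1 := by have := hp.two_le; omega
  have hdiv : a i ≤ (R-1)/(p-1) := (Nat.le_div_iff_mul_le hp1).2 (by rw [Nat.mul_comm]; exact hkey)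
  rw [hax i]
  exact Nat.pow_le_pow_right hp.pos hdiv
end

section
/- Let p be a prime. If there exists a tuple of positive integers x_1, ..., x_R, each a power of p, with ∑_{i=1}^R 1/x_i = 1, then p - 1 divides R - 1. -/
/-!
Clearing denominators with `p ^ A`, where `A` is the largest exponent, turns `∑ 1 / p ^ aᵢ = 1`
into `∑ p ^ (A - aᵢ) = p ^ A`. Since `p ≡ 1 [MOD p - 1]`, every power of `p` is `≡ 1`, so
reducing both sides modulo `p - 1` gives `R ≡ 1 [MOD p - 1]`.
-/

open Finset

theorem Nat.sum_pow_modEq_card {ι : Type*} (s : Finset ι) {p m : ℕ} (hp : p ≡ 1 [MOD m])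
    (e : ι → ℕ) : ∑ i ∈ s, p ^ e i ≡ #s [MOD m] := by
  rw [card_eq_sum_ones]
  exact Nat.ModEq.sum fun i _ => by simpa using hp.pow (e i)

theorem sum_pow_sub_eq_pow_of_sum_inv_pow_eq_one {ι : Type*} (s : Finset ι) {p : ℕ} (hp : p ≠ 0)
    (a : ι → ℕ) {A : ℕ} (hA : ∀ i ∈ s, a i ≤ A) (h : ∑ i ∈ s, ((p : ℚ) ^ a i)⁻¹ = 1) :
    ∑ i ∈ s, p ^ (A - a i) = p ^ A := by
  have hp' : (p : ℚ) ≠ 0 := by exact_mod_cast hp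
  suffices ∑ i ∈ s, (p : ℚ) ^ (A - a i) = (p : ℚ) ^ A by exact_mod_cast this
  calc ∑ i ∈ s, (p : ℚ) ^ (A - a i)
      = ∑ i ∈ s, (p : ℚ) ^ A * ((p : ℚ) ^ a i)⁻¹ :=
        sum_congr rfl fun i hi => pow_sub₀ _ hp' (hA i hi)
    _ = (p : ℚ) ^ A := by rw [← mul_sum, h, mul_one]

theorem stmt_5 (p R : ℕ) (hp : p.Prime)
    (x : Fin R → ℕ) (hpow : ∀ i, ∃ a : ℕ, x i = p ^ a)
    (hsum : ∑ i, ((x i : ℚ))⁻¹ = 1) :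
    (p - 1) ∣ (R - 1) := by
  choose a ha using hpow
  obtain rfl : x = fun i => p ^ a i := funext ha
  obtain rfl | hR := Nat.eq_zero_or_pos R
  · simp at hsum
  have hp1 : p ≡ 1 [MOD p - 1] := Nat.modEq_sub hp.one_le
  have hcleared := sum_pow_sub_eq_pow_of_sum_inv_pow_eq_one univ hp.ne_zero a
    (fun i _ => le_sup (f := a) (mem_univ i)) (by simpa using hsum)
  have hR1 : R ≡ 1 [MOD p - 1] :=
    calc R = #(univ : Finset (Fin R)) := by simp
      _ ≡ ∑ i, p ^ (univ.sup a - a i) [MOD p - 1] := (Nat.sum_pow_modEq_card _ hp1 _).symm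
      _ = p ^ univ.sup a := hcleared
      _ ≡ 1 [MOD p - 1] := by simpa using hp1.pow (univ.sup a)
  exact (Nat.modEq_iff_dvd' hR).mp hR1.symm
end

section
/- For any number of terms R ≥ 1, there do not exist positive integers x_1, ..., x_R, each of the form 2^a · 11^b with a, b ≥ 0, such that ∑_{i=1}^R 1/x_i = 1, R = 5, and at least one x_i is divisible by 2 and at least one x_i is divisible by 11. -/
/-!
Split the denominators into the multiples of 11 and the rest, which are powers of two. Since a
sum of `m` reciprocals of powers of two that is below `1` falls short of `1` by at least `2⁻ᵐ`,
the multiples of 11 contribute at least `2⁻ᵐ`; with at most five terms in total this forces each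
of them to be `11` or `22`. Their contribution is then `M / 22` with `0 < M < 11`, which is not a
dyadic rational, whereas it equals `1` minus a dyadic rational.
-/

open Finset

theorem two_pow_le_two_pow_card_mul_sub {ι : Type*} (s : Finset ι) (e : ι → ℕ) (N : ℕ)
    (h : ∑ i ∈ s, 2 ^ e i < 2 ^ N) : 2 ^ N ≤ 2 ^ #s * (2 ^ N - ∑ i ∈ s, 2 ^ e i) := by
  classical
  induction s using Finset.induction_on_min_value e with
  | empty => simp
  | insert j s hj hmin ih =>
    rw [sum_insert hj] at h ⊢
    rw [card_insert_of_notMem hj, pow_succ, mul_assoc]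
    set n := ∑ i ∈ s, 2 ^ e i
    have hjN : e j < N := (Nat.pow_lt_pow_iff_right (by norm_num)).1 (by omega : 2 ^ e j < 2 ^ N)
    -- `2 ^ e j` is the smallest term, so it divides the gap `2 ^ N - n` left by the others.
    obtain ⟨q, hq⟩ : 2 ^ e j ∣ 2 ^ N - n :=
      Nat.dvd_sub (pow_dvd_pow 2 hjN.le) (dvd_sum fun i hi => pow_dvd_pow 2 (hmin i hi))
    have hpos : 0 < 2 ^ e j := by positivity
    have hq2 : 2 ≤ q := by
      by_contra! hq1
      interval_cases q <;> omega
    have : 2 ^ e j * 2 ≤ 2 ^ N - n := hq ▸ Nat.mul_le_mul_left _ hq2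
    calc 2 ^ N ≤ 2 ^ #s * (2 ^ N - n) := ih (by omega)
      _ ≤ 2 ^ #s * (2 * (2 ^ N - (2 ^ e j + n))) := by gcongr; omega

theorem sum_inv_two_pow_mul_two_pow {ι : Type*} (s : Finset ι) (a : ι → ℕ) {N : ℕ}
    (ha : ∀ i ∈ s, a i ≤ N) :
    (∑ i ∈ s, ((2 : ℚ) ^ a i)⁻¹) * 2 ^ N = ((∑ i ∈ s, 2 ^ (N - a i) : ℕ) : ℚ) := by
  push_cast
  rw [sum_mul]
  refine sum_congr rfl fun i hi => ?_
  rw [pow_sub₀ _ two_ne_zero (ha i hi)]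
  ring

theorem sum_inv_two_pow_le_one_sub {ι : Type*} (s : Finset ι) (a : ι → ℕ)
    (h : ∑ i ∈ s, ((2 : ℚ) ^ a i)⁻¹ < 1) :
    ∑ i ∈ s, ((2 : ℚ) ^ a i)⁻¹ ≤ 1 - ((2 : ℚ) ^ #s)⁻¹ := by
  set N := ∑ i ∈ s, a i
  set n := ∑ i ∈ s, 2 ^ (N - a i)
  have hn : (∑ i ∈ s, ((2 : ℚ) ^ a i)⁻¹) * 2 ^ N = n :=
    sum_inv_two_pow_mul_two_pow s a fun i hi => single_le_sum (fun _ _ => Nat.zero_le _) hi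
  have hnN : n < 2 ^ N := by
    have : (n : ℚ) < 2 ^ N := by rw [← hn]; exact mul_lt_of_lt_one_left (by positivity) h
    exact_mod_cast this
  have hgap : ((2 ^ N : ℕ) : ℚ) ≤ ((2 ^ #s * (2 ^ N - n) : ℕ) : ℚ) := by
    exact_mod_cast two_pow_le_two_pow_card_mul_sub s _ N hnN
  push_cast [Nat.cast_sub hnN.le] at hgap
  rw [le_sub_iff_add_le, ← mul_le_mul_iff_of_pos_right (by positivity : (0 : ℚ) < 2 ^ N * 2 ^ #s)]
  calc _ = n * 2 ^ #s + (2 : ℚ) ^ N := by rw [← hn]; field_simp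
    _ ≤ _ := by linarith

theorem sum_inv_mul_eq_natCast_of_dvd {ι : Type*} (s : Finset ι) (y : ι → ℕ) {n : ℕ}
    (h : ∀ i ∈ s, y i ∣ n) :
    (∑ i ∈ s, ((y i : ℚ))⁻¹) * n = ((∑ i ∈ s, n / y i : ℕ) : ℚ) := by
  push_cast
  rw [sum_mul]
  refine sum_congr rfl fun i hi => ?_
  rw [Nat.cast_div_charZero (h i hi)]
  ring

theorem mul_two_pow_ne_intCast {q : ℚ} {M : ℕ} (hM : q * 22 = M) (hM0 : 0 < M) (hM11 : M < 11)
    (N : ℕ) (c : ℤ) : q * 2 ^ N ≠ c := by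
  intro hc
  have hMc : (M : ℤ) * 2 ^ N = 22 * c := by
    have : (M : ℚ) * 2 ^ N = 22 * c := by rw [← hM, ← hc]; ring
    exact_mod_cast this
  have h11 : (11 : ℤ) ∣ M * 2 ^ N := ⟨2 * c, by rw [hMc]; ring⟩
  rcases (Int.prime_iff_natAbs_prime.2 (by norm_num)).dvd_or_dvd h11 with h | h
  · omega
  · have := Int.Prime.dvd_pow' (by norm_num : Nat.Prime 11) h
    norm_num at this

theorem inv_le_inv_eleven_of_eleven_dvd {x : ℕ} (h : 11 ∣ x) : ((x : ℚ))⁻¹ ≤ 11⁻¹ := by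
  obtain ⟨c, rfl⟩ := h
  push_cast
  rw [mul_inv]
  exact mul_le_of_le_one_right (by norm_num) (Nat.cast_inv_le_one c)

section MultiplesOfEleven

variable {ι : Type*} {S : Finset ι} {x : ι → ℕ}

theorem dvd_twentytwo_of_inv_two_pow_le_sum_inv (h11 : ∀ i ∈ S, 11 ∣ x i) {m : ℕ}
    (hcard : #S + m ≤ 5) (hsum : ((2 : ℚ) ^ m)⁻¹ ≤ ∑ i ∈ S, ((x i : ℚ))⁻¹) {j : ι} (hj : j ∈ S) :
    x j ∣ 22 := by
  classical
  have hrest : ∑ i ∈ S.erase j, ((x i : ℚ))⁻¹ ≤ (#S - 1 : ℕ) * 11⁻¹ := by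
    rw [← card_erase_of_mem hj, ← nsmul_eq_mul]
    exact sum_le_card_nsmul _ _ _ fun i hi =>
      inv_le_inv_eleven_of_eleven_dvd (h11 i (mem_of_mem_erase hi))
  have hnum : (33 : ℚ)⁻¹ < ((2 : ℚ) ^ m)⁻¹ - (#S - 1 : ℕ) * 11⁻¹ := by
    have hk : 1 ≤ #S := card_pos.2 ⟨j, hj⟩
    generalize #S = k at hk hcard ⊢
    have hk5 : k ≤ 5 := by omega
    have hm : m ≤ 5 - k := by omega
    interval_cases k <;> interval_cases m <;> norm_num
  have hxj : (33 : ℚ)⁻¹ < ((x j : ℚ))⁻¹ := by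
    linarith [add_sum_erase S (fun i => ((x i : ℚ))⁻¹) hj]
  have hxj0 : 0 < x j := by
    by_contra! h0
    rw [Nat.le_zero.1 h0] at hxj
    norm_num at hxj
  have hxj33 : x j < 33 := by
    exact_mod_cast (inv_lt_inv₀ (by norm_num) (by exact_mod_cast hxj0)).1 hxj
  obtain ⟨c, hc⟩ := h11 j hj
  rw [hc] at hxj0 hxj33 ⊢
  have : 0 < c := by omega
  have : c < 3 := by omega
  interval_cases c <;> norm_num

theorem sum_inv_mul_two_pow_ne_intCast (h11 : ∀ i ∈ S, 11 ∣ x i) (h22 : ∀ i ∈ S, x i ∣ 22)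
    (hS : S.Nonempty) (hcard : #S ≤ 5) (N : ℕ) (c : ℤ) :
    (∑ i ∈ S, ((x i : ℚ))⁻¹) * 2 ^ N ≠ c := by
  set E := ∑ i ∈ S, ((x i : ℚ))⁻¹
  set M := ∑ i ∈ S, 22 / x i
  have hM : E * 22 = M := sum_inv_mul_eq_natCast_of_dvd S x h22
  have hE0 : 0 < E := sum_pos (fun i hi => by
    have : x i ≠ 0 := fun h => by simpa [h] using h22 i hi
    positivity) hS
  have hE5 : E ≤ 5 * 11⁻¹ := by
    calc E ≤ #S • (11 : ℚ)⁻¹ :=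
          sum_le_card_nsmul _ _ _ fun i hi => inv_le_inv_eleven_of_eleven_dvd (h11 i hi)
      _ ≤ 5 * 11⁻¹ := by rw [nsmul_eq_mul]; gcongr; exact_mod_cast hcard
  refine mul_two_pow_ne_intCast hM ?_ ?_ N c
  · exact_mod_cast (show (0 : ℚ) < M by rw [← hM]; positivity)
  · exact_mod_cast (show (M : ℚ) < 11 by rw [← hM]; linarith)

end MultiplesOfEleven

theorem eq_two_pow_of_not_eleven_dvd {x a b : ℕ} (hx : x = 2 ^ a * 11 ^ b) (h11 : ¬ 11 ∣ x) :
    x = 2 ^ a := by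
  obtain rfl | hb := Nat.eq_zero_or_pos b
  · simpa using hx
  · exact absurd (hx ▸ dvd_mul_of_dvd_right (dvd_pow_self 11 hb.ne') _) h11

theorem sum_inv_ne_one_of_eleven_dvd {ι : Type*} [Fintype ι] (hcard : Fintype.card ι ≤ 5)
    (x : ι → ℕ) (hx : ∀ i, ∃ a b : ℕ, x i = 2 ^ a * 11 ^ b) (h11 : ∃ i, 11 ∣ x i) :
    ∑ i, ((x i : ℚ))⁻¹ ≠ 1 := by
  classical
  intro hsum
  choose a b hab using hx
  set S := univ.filter fun i => 11 ∣ x i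
  set T := univ.filter fun i => ¬ 11 ∣ x i
  set D := ∑ i ∈ T, ((2 : ℚ) ^ a i)⁻¹
  have hxpos : ∀ i, 0 < x i := fun i => hab i ▸ by positivity
  have hDE : ∑ i ∈ S, ((x i : ℚ))⁻¹ + D = 1 := by
    rw [← hsum, ← sum_filter_add_sum_filter_not univ fun i => 11 ∣ x i]
    congr 1
    refine sum_congr rfl fun i hi => ?_
    rw [eq_two_pow_of_not_eleven_dvd (hab i) (mem_filter.1 hi).2]
    push_cast
    rfl
  have hST : #S + #T ≤ 5 := (card_filter_add_card_filter_not _).trans_le hcard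
  have hS : S.Nonempty := h11.imp fun i hi => mem_filter.2 ⟨mem_univ i, hi⟩
  have hS11 : ∀ i ∈ S, 11 ∣ x i := fun i hi => (mem_filter.1 hi).2
  have hE : 0 < ∑ i ∈ S, ((x i : ℚ))⁻¹ :=
    sum_pos (fun i _ => by have := hxpos i; positivity) hS
  have hgap := sum_inv_two_pow_le_one_sub T a (by linarith)
  have h22 : ∀ j ∈ S, x j ∣ 22 := fun j =>
    dvd_twentytwo_of_inv_two_pow_le_sum_inv hS11 hST (by linarith)
  set N := ∑ i ∈ T, a i
  set n := ∑ i ∈ T, 2 ^ (N - a i)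
  have hD : D * 2 ^ N = n :=
    sum_inv_two_pow_mul_two_pow T a fun i hi => single_le_sum (fun _ _ => Nat.zero_le _) hi
  refine sum_inv_mul_two_pow_ne_intCast hS11 h22 hS (by omega) N (2 ^ N - n) ?_
  push_cast
  rw [← hD]
  linear_combination (2 : ℚ) ^ N * hDE

theorem stmt_7 : ¬ ∃ (R : ℕ) (x : Fin R → ℕ),
    1 ≤ R ∧ R = 5 ∧
    (∀ i, 0 < x i) ∧
    (∀ i, ∃ a b : ℕ, x i = 2 ^ a * 11 ^ b) ∧
    (∑ i, ((x i : ℚ))⁻¹ = 1) ∧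
    (∃ i, 2 ∣ x i) ∧ (∃ i, 11 ∣ x i) := by
  rintro ⟨R, x, -, rfl, -, hx, hsum, -, h11⟩
  exact sum_inv_ne_one_of_eleven_dvd (by simp) x hx h11 hsum
end

section
/- Suppose x_1 ≤ x_2 ≤ ... ≤ x_n are positive integers with ∑_{i=1}^n 1/x_i = 1. Then x_i ≥ i for every i, and if x_j = j for some j then j = n and all x_i = n. -/
theorem stmt_14 (n : ℕ) (x : Fin n → ℕ) (hmono : Monotone x) (hpos : ∀ i, 0 < x i)
    (hsum : ∑ i, ((x i : ℚ))⁻¹ = 1) :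
    (∀ i : Fin n, (i : ℕ) + 1 ≤ x i) ∧
    (∀ j : Fin n, x j = (j : ℕ) + 1 → ((j : ℕ) + 1 = n ∧ ∀ i, x i = n)) := by
  have hx : ∀ i : Fin n, (0:ℚ) < (x i : ℚ) := fun i => by exact_mod_cast hpos i
  have hpt : ∀ i : Fin n, ∀ k ∈ Finset.Iic i, ((x i:ℚ))⁻¹ ≤ ((x k:ℚ))⁻¹ := by
    intro i k hk
    have h := hmono (Finset.mem_Iic.mp hk)
    exact inv_anti₀ (hx k) (by exact_mod_cast h)
  have key : ∀ i : Fin n, ((i:ℕ)+1 : ℚ) * ((x i:ℚ))⁻¹ ≤ ∑ k ∈ Finset.Iic i, ((x k:ℚ))⁻¹ := by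
    intro i
    calc ((i:ℕ)+1 : ℚ) * ((x i:ℚ))⁻¹ = ∑ _k ∈ Finset.Iic i, ((x i:ℚ))⁻¹ := by
          rw [Finset.sum_const, Fin.card_Iic]; push_cast; ring
      _ ≤ _ := Finset.sum_le_sum (hpt i)
  have hle : ∀ i : Fin n, ∑ k ∈ Finset.Iic i, ((x k:ℚ))⁻¹ ≤ 1 := by
    intro i
    rw [← hsum]
    apply Finset.sum_le_sum_of_subset_of_nonneg (Finset.subset_univ _)
    intro k _ _; positivity
  have part1 : ∀ i : Fin n, (i : ℕ) + 1 ≤ x i := by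
    intro i
    have h := le_trans (key i) (hle i)
    have h2 : ((i:ℕ)+1 : ℚ) ≤ (x i : ℚ) := by
      rw [← div_le_one (hx i)] at *
      simpa [div_eq_mul_inv] using h
    exact_mod_cast h2
  refine ⟨part1, ?_⟩
  intro j hj
  have hxj : (x j : ℚ) = (j:ℕ)+1 := by exact_mod_cast hj
  have hsumIic : ∑ k ∈ Finset.Iic j, ((x k:ℚ))⁻¹ = 1 := by
    have h1 : (1:ℚ) ≤ ∑ k ∈ Finset.Iic j, ((x k:ℚ))⁻¹ := by
      have := key j
      rw [hxj, mul_inv_cancel₀ (by positivity)] at this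
      exact this
    exact le_antisymm (hle j) h1
  have hcompl : Finset.Iic j = Finset.univ := by
    by_contra hne
    have hss : Finset.Iic j ⊂ Finset.univ := (Finset.subset_univ _).ssubset_of_ne hne
    obtain ⟨m, hm, hm2⟩ := Finset.exists_of_ssubset hss
    have : ∑ k ∈ Finset.Iic j, ((x k:ℚ))⁻¹ < ∑ k, ((x k:ℚ))⁻¹ := by
      refine Finset.sum_lt_sum_of_subset hss.subset hm hm2 (inv_pos.mpr (hx m)) ?_
      intro k _ _; positivity
    rw [hsum, hsumIic] at this
    exact lt_irrefl _ this
  have hcard : (j:ℕ) + 1 = n := by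
    have := congrArg Finset.card hcompl
    rwa [Fin.card_Iic, Finset.card_univ, Fintype.card_fin] at this
  refine ⟨hcard, ?_⟩
  have hconst : ∑ _k ∈ Finset.Iic j, ((x j:ℚ))⁻¹ = 1 := by
    rw [Finset.sum_const, Fin.card_Iic, hxj]
    push_cast
    rw [nsmul_eq_mul]; push_cast
    exact mul_inv_cancel₀ (by positivity)
  have heq : ∀ k ∈ Finset.Iic j, ((x j:ℚ))⁻¹ = ((x k:ℚ))⁻¹ := by
    have := (Finset.sum_eq_sum_iff_of_le (hpt j)).mp (by rw [hconst, hsumIic])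
    intro k hk; exact (this k hk)
  intro i
  have hi : i ∈ Finset.Iic j := hcompl ▸ Finset.mem_univ i
  have := heq i hi
  have hxi : (x j : ℚ) = (x i : ℚ) := inv_injective this
  have : x j = x i := by exact_mod_cast hxi
  omega
end

section
/- For a fixed prime p and a fixed t ≥ 1, the number of multisets {a_1, ..., a_R} of nonnegative integers with R = (p-1)t + 1 and ∑_{i=1}^R p^{-a_i} = 1 is at most 2^{t-1} = 2^{(R-1)/(p-1) - 1} for t ≥ 1. -/
/-!
If a solution has largest exponent `m ≥ 1`, multiplying `∑ p^(-a) = 1` by `p^m` shows that `m`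
occurs a multiple of `p` times, so `p` copies of `m` can be merged into one copy of `m - 1`; this
gives a solution with `t` lowered by one. The new exponent `m - 1` is either the largest exponent
of the merged solution or one less than it, so splitting it back shows that merging is at most
two-to-one. For `t = 1` only `p` copies of `1` remain, since for `t = 0` the only solution is `{0}`.
-/

open Multiset

theorem Multiset.sup_mem_of_ne_zero {α : Type*} [LinearOrder α] [OrderBot α] {s : Multiset α}
    (hs : s ≠ 0) : s.sup ∈ s := by
  induction s using Multiset.induction_on with
  | empty => exact absurd rfl hs
  | cons a s ih =>
    rw [sup_cons]
    rcases eq_or_ne s 0 with rfl | hs'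
    · simp
    · rcases max_choice a s.sup with h | h <;> rw [h]
      · exact mem_cons_self a s
      · exact mem_cons_of_mem (ih hs')

namespace UnitFractionPowers

def invPowSum (p : ℕ) (s : Multiset ℕ) : ℚ :=
  (s.map fun a => ((p : ℚ) ^ a)⁻¹).sum

def solutions (p t : ℕ) : Set (Multiset ℕ) :=
  {s | card s = (p - 1) * t + 1 ∧ invPowSum p s = 1}

def split (p : ℕ) (s : Multiset ℕ) (a : ℕ) : Multiset ℕ :=
  s.erase a + replicate p (a + 1)

def mergeMax (p : ℕ) (s : Multiset ℕ) : Multiset ℕ :=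
  (s.sup - 1) ::ₘ (s - replicate p s.sup)

variable {p t : ℕ} {s : Multiset ℕ}

lemma invPowSum_add (s₁ s₂ : Multiset ℕ) :
    invPowSum p (s₁ + s₂) = invPowSum p s₁ + invPowSum p s₂ := by
  simp [invPowSum]

lemma invPowSum_cons (a : ℕ) (s : Multiset ℕ) :
    invPowSum p (a ::ₘ s) = ((p : ℚ) ^ a)⁻¹ + invPowSum p s := by
  simp [invPowSum]

lemma invPowSum_replicate_succ (hp : p ≠ 0) (a : ℕ) :
    invPowSum p (replicate p (a + 1)) = ((p : ℚ) ^ a)⁻¹ := by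
  have : (p : ℚ) ≠ 0 := by exact_mod_cast hp
  simp [invPowSum, pow_succ]
  field_simp

lemma sum_map_pow_sub_eq (hp : p ≠ 0) (hs : invPowSum p s = 1) {m : ℕ}
    (hle : ∀ a ∈ s, a ≤ m) : (s.map fun a => p ^ (m - a)).sum = p ^ m := by
  have hp' : (p : ℚ) ≠ 0 := by exact_mod_cast hp
  have : (s.map fun a => (p : ℚ) ^ (m - a)).sum = (p : ℚ) ^ m := by
    rw [map_congr rfl fun a ha => pow_sub₀ _ hp' (hle a ha), sum_map_mul_left,
      ← invPowSum, hs, mul_one]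
  apply Nat.cast_injective (R := ℚ)
  simpa [Nat.cast_multiset_sum, Function.comp_def] using this

lemma dvd_count_of_forall_le (hp : p ≠ 0) (hs : invPowSum p s = 1) {m : ℕ} (hm : 1 ≤ m)
    (hle : ∀ a ∈ s, a ≤ m) : p ∣ s.count m := by
  have hsum := sum_map_pow_sub_eq hp hs hle
  rw [← filter_add_not (· = m) s, map_add, sum_add, filter_eq', map_replicate, Nat.sub_self,
    pow_zero, sum_replicate, smul_eq_mul, mul_one] at hsum
  have hrest : p ∣ ((s.filter (· ≠ m)).map fun a => p ^ (m - a)).sum := by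
    refine dvd_sum fun x hx => ?_
    obtain ⟨a, ha, rfl⟩ := mem_map.mp hx
    obtain ⟨has, ham⟩ := mem_filter.mp ha
    exact dvd_pow_self p (by have := hle a has; omega)
  exact (Nat.dvd_add_left hrest).mp (hsum ▸ dvd_pow_self p (by omega))

lemma one_le_sup (hp : 2 ≤ p) (hs : s ∈ solutions p (t + 1)) : 1 ≤ s.sup := by
  by_contra! h
  have hzero : s = replicate (card s) 0 :=
    eq_replicate_card.mpr fun a ha => by have := le_sup ha; omega
  have hcard_one := hs.2
  rw [hzero, invPowSum] at hcard_one
  simp only [map_replicate, pow_zero, inv_one, sum_replicate, nsmul_eq_mul, mul_one,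
    Nat.cast_eq_one] at hcard_one
  have := hcard_one ▸ hs.1
  rw [mul_add] at this
  omega

lemma replicate_sup_le (hp : 2 ≤ p) (hs : s ∈ solutions p (t + 1)) :
    replicate p s.sup ≤ s := by
  have hne : s ≠ 0 := card_pos.mp (by rw [hs.1]; omega)
  rw [← le_count_iff_replicate_le]
  exact Nat.le_of_dvd (count_pos.mpr (sup_mem_of_ne_zero hne))
    (dvd_count_of_forall_le (by omega) hs.2 (one_le_sup hp hs) fun a => le_sup)

lemma sup_sub_one_le_sup_mergeMax (s : Multiset ℕ) : s.sup - 1 ≤ (mergeMax p s).sup :=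
  le_sup (mem_cons_self _ _)

lemma sup_mergeMax_le (s : Multiset ℕ) : (mergeMax p s).sup ≤ s.sup :=
  sup_le.mpr fun a ha => by
    rcases mem_cons.mp ha with rfl | ha
    · omega
    · exact le_sup (subset_of_le (Multiset.sub_le_self _ _) ha)

lemma split_mergeMax (h : replicate p s.sup ≤ s) (hm : 1 ≤ s.sup) :
    split p (mergeMax p s) (s.sup - 1) = s := by
  rw [split, mergeMax, erase_cons_head, Nat.sub_add_cancel hm, tsub_add_cancel_of_le h]

lemma mergeMax_mem_solutions (hp : 2 ≤ p) (hs : s ∈ solutions p (t + 1)) :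
    mergeMax p s ∈ solutions p t := by
  have hle := replicate_sup_le hp hs
  have hm := one_le_sup hp hs
  constructor
  · rw [mergeMax, card_cons, card_sub hle, card_replicate, hs.1, mul_add]
    omega
  · have hrep : invPowSum p (replicate p s.sup) = ((p : ℚ) ^ (s.sup - 1))⁻¹ := by
      simpa [Nat.sub_add_cancel hm] using invPowSum_replicate_succ (p := p) (by omega) (s.sup - 1)
    have := hs.2
    rw [← tsub_add_cancel_of_le hle, invPowSum_add, hrep] at this
    rw [mergeMax, invPowSum_cons, ← this, add_comm]

lemma solutions_succ_subset (hp : 2 ≤ p) :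
    solutions p (t + 1) ⊆
      (fun s => split p s s.sup) '' solutions p t ∪
        (fun s => split p s (s.sup - 1)) '' solutions p t := by
  intro s hs
  have hmerge := mergeMax_mem_solutions hp hs
  have hsplit := split_mergeMax (replicate_sup_le hp hs) (one_le_sup hp hs)
  have := sup_sub_one_le_sup_mergeMax (p := p) s
  have := sup_mergeMax_le (p := p) s
  rcases (by omega : s.sup - 1 = (mergeMax p s).sup ∨ s.sup - 1 = (mergeMax p s).sup - 1)
    with h | h
  · exact Or.inl ⟨_, hmerge, by beta_reduce; rw [← h]; exact hsplit⟩
  · exact Or.inr ⟨_, hmerge, by beta_reduce; rw [← h]; exact hsplit⟩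

lemma solutions_zero_subset (hp : 2 ≤ p) : solutions p 0 ⊆ {{0}} := by
  rintro s ⟨hcard, hsum⟩
  obtain ⟨a, rfl⟩ := card_eq_one.mp (by simpa using hcard)
  have : p ^ a = 1 := by exact_mod_cast (by simpa [invPowSum] using hsum : (p : ℚ) ^ a = 1)
  rw [Set.mem_singleton_iff, singleton_inj]
  exact (Nat.pow_eq_one.mp this).resolve_left (by omega)

lemma solutions_one_subset (hp : 2 ≤ p) : solutions p 1 ⊆ {replicate p 1} := by
  intro s hs
  rcases solutions_succ_subset hp hs with ⟨s', hs', rfl⟩ | ⟨s', hs', rfl⟩ <;>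
    obtain rfl := solutions_zero_subset hp hs' <;> simp [split]

lemma solutions_finite (hp : 2 ≤ p) (t : ℕ) : (solutions p t).Finite := by
  induction t with
  | zero => exact (Set.finite_singleton _).subset (solutions_zero_subset hp)
  | succ t ih => exact ((ih.image _).union (ih.image _)).subset (solutions_succ_subset hp)

lemma ncard_solutions_succ_le (hp : 2 ≤ p) (t : ℕ) :
    (solutions p (t + 1)).ncard ≤ 2 * (solutions p t).ncard := by
  have hfin := solutions_finite hp t
  calc (solutions p (t + 1)).ncard
      ≤ ((fun s => split p s s.sup) '' solutions p t ∪
          (fun s => split p s (s.sup - 1)) '' solutions p t).ncard :=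
        Set.ncard_le_ncard (solutions_succ_subset hp) ((hfin.image _).union (hfin.image _))
    _ ≤ ((fun s => split p s s.sup) '' solutions p t).ncard +
          ((fun s => split p s (s.sup - 1)) '' solutions p t).ncard := Set.ncard_union_le _ _
    _ ≤ 2 * (solutions p t).ncard := by
        have := Set.ncard_image_le (f := fun s => split p s s.sup) hfin
        have := Set.ncard_image_le (f := fun s => split p s (s.sup - 1)) hfin
        omega

lemma ncard_solutions_le (hp : 2 ≤ p) {t : ℕ} (ht : 1 ≤ t) :
    (solutions p t).ncard ≤ 2 ^ (t - 1) := by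
  induction t, ht using Nat.le_induction with
  | base => simpa using Set.ncard_le_ncard (solutions_one_subset hp)
  | succ t ht ih =>
    calc (solutions p (t + 1)).ncard ≤ 2 * (solutions p t).ncard := ncard_solutions_succ_le hp t
      _ ≤ 2 * 2 ^ (t - 1) := by omega
      _ = 2 ^ (t + 1 - 1) := by rw [← pow_succ']; congr 1; omega

end UnitFractionPowers

theorem stmt_19 (p t : ℕ) (hp : p.Prime) (ht : 1 ≤ t) :
    {s : Multiset ℕ | Multiset.card s = (p - 1) * t + 1 ∧
        (s.map (fun a => ((p : ℚ) ^ a)⁻¹)).sum = 1}.Finite ∧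
    Set.ncard {s : Multiset ℕ | Multiset.card s = (p - 1) * t + 1 ∧
        (s.map (fun a => ((p : ℚ) ^ a)⁻¹)).sum = 1} ≤ 2 ^ (t - 1) :=
  ⟨UnitFractionPowers.solutions_finite hp.two_le t,
    UnitFractionPowers.ncard_solutions_le hp.two_le ht⟩
end
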